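/- Suppose ρ ≥ 1 and the invariant measure is not summable, i.e. S_π(N) → ∞ as N → ∞. Then lim_{N→∞} S_π(N)·(P_loss(N) − (1 − 1/ρ)) = E[V]π₀ / (ρ E[S] (1−ν₀)). -/

import Mathlib

open MeasureTheory Filter Set Topology Asymptotics
open scoped ENNReal

noncomputable section

/-- Laplace-transform value `F*(λ − λz) = ∫ e^{−(λ−λz)t} dF(t)` (Bochner integral). -/
def qLap (μ : Measure ℝ) (lam z : ℝ) : ℝ := ∫ t, Real.exp (-(lam - lam * z) * t) ∂μ

/-- Derivative value `F*'(λ − λz) = ∫ λ t e^{−(λ−λz)t} dF(t)`. -/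
def qLapD (μ : Measure ℝ) (lam z : ℝ) : ℝ := ∫ t, lam * t * Real.exp (-(lam - lam * z) * t) ∂μ

/-- Laplace-transform value as a lower integral in `ℝ≥0∞` (possibly `+∞`). -/
def qLapE (μ : Measure ℝ) (lam z : ℝ) : ℝ≥0∞ :=
  ∫⁻ t, ENNReal.ofReal (Real.exp (-(lam - lam * z) * t)) ∂μ

/-- `R` is the leftmost (real) singular point of `z ↦ F*(λ − λz)`:
`∫ e^{λ(r−1)t} dF(t)` converges for `1 ≤ r < R` and diverges for `r > R`. -/
def qAbscissa (μ : Measure ℝ) (lam R : ℝ) : Prop :=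
  1 ≤ R ∧ (∀ r : ℝ, 1 ≤ r → r < R → Integrable (fun t => Real.exp (lam * (r - 1) * t)) μ) ∧
    (∀ r : ℝ, R < r → ¬ Integrable (fun t => Real.exp (lam * (r - 1) * t)) μ)

/-- `a_j` (resp. `ν_j`): probability that `j` Poisson(λ) arrivals occur during a
time distributed according to `μ`. -/
def qCoef (μ : Measure ℝ) (lam : ℝ) (j : ℕ) : ℝ :=
  ∫ t, (lam * t) ^ j / (Nat.factorial j : ℝ) * Real.exp (-lam * t) ∂μ

/-- `b_j = ∑_{i=1}^{j+1} (ν_i / (1 − ν₀)) a_{j+1−i}`. -/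
def qBcoef (μS μV : Measure ℝ) (lam : ℝ) (j : ℕ) : ℝ :=
  ∑ i ∈ Finset.Icc 1 (j + 1), qCoef μV lam i / (1 - qCoef μV lam 0) * qCoef μS lam (j + 1 - i)

/-- A positive measurable function is slowly varying at `+∞`. -/
def SlowlyVaryingAtTop (L : ℝ → ℝ) : Prop :=
  Measurable L ∧ (∀ x : ℝ, 0 < x → 0 < L x) ∧
    ∀ t : ℝ, 0 < t → Tendsto (fun x => L (t * x) / L x) atTop (nhds 1)

theorem integral_exp_neg_mul_lt_one (μ : Measure ℝ) [IsProbabilityMeasure μ]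
    (hsupp : μ (Set.Iio 0) = 0) (hpos : 0 < μ (Set.Ioi 0)) {lam : ℝ} (hlam : 0 < lam) :
    ∫ t, Real.exp (-lam * t) ∂μ < 1 := by
  have hnonneg : ∀ᵐ t ∂μ, 0 ≤ t := by
    rw [ae_iff]
    exact measure_mono_null (fun t (ht : ¬ 0 ≤ t) => not_le.1 ht) hsupp
  have hle : ∀ᵐ t ∂μ, Real.exp (-lam * t) ≤ 1 := by
    filter_upwards [hnonneg] with t ht
    exact Real.exp_le_one_iff.2 (by nlinarith)
  have hint : Integrable (fun t => Real.exp (-lam * t)) μ :=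
    (integrable_const 1).mono' (by fun_prop) (by simpa [abs_of_pos (Real.exp_pos _)] using hle)
  have hgap : 0 < ∫ t, (1 - Real.exp (-lam * t)) ∂μ := by
    rw [integral_pos_iff_support_of_nonneg_ae (hle.mono fun t => sub_nonneg.2)
      ((integrable_const 1).sub hint)]
    refine hpos.trans_le (measure_mono fun t (ht : 0 < t) => ?_)
    have : Real.exp (-lam * t) < 1 := Real.exp_lt_one_iff.2 (by nlinarith)
    exact (sub_pos.2 this).ne'
  rw [integral_sub (integrable_const 1) hint, integral_const, probReal_univ, one_smul] at hgap
  linarith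

theorem qCoef_zero_lt_one (μ : Measure ℝ) [IsProbabilityMeasure μ]
    (hsupp : μ (Set.Iio 0) = 0) (hpos : 0 < μ (Set.Ioi 0)) {lam : ℝ} (hlam : 0 < lam) :
    qCoef μ lam 0 < 1 := by
  simpa [qCoef] using integral_exp_neg_mul_lt_one μ hsupp hpos hlam

theorem tendsto_div_const_add_mul_atTop (c : ℝ) {B : ℝ} (hB : B ≠ 0) :
    Tendsto (fun x : ℝ => x / (c + B * x)) atTop (𝓝 B⁻¹) := by
  have hrecip : Tendsto (fun x : ℝ => (c / x + B)⁻¹) atTop (𝓝 B⁻¹) := by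
    simpa using ((tendsto_const_nhds.div_atTop tendsto_id).add_const B).inv₀ (by rwa [zero_add])
  refine hrecip.congr' ?_
  filter_upwards [eventually_gt_atTop 0] with x hx
  rw [div_add' _ _ _ hx.ne', inv_div, add_comm, mul_comm]

/-- With `a = EV π₀`, `d = 1 − ν₀`, `s = S_π(N)` and `ρ = λ ES`, the left side is
`S_π(N) (P_loss(N) − (1 − 1/ρ))`; the terms linear in `s` cancel because `ES / ρ = λ⁻¹`. -/
theorem mul_loss_sub_eq (lam ES a d s : ℝ) (hlam : lam ≠ 0) (hES : ES ≠ 0)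
    (hden : a + ES * d * s ≠ 0) :
    s * ((a + (ES - lam⁻¹) * d * s) / (a + ES * d * s) - (1 - 1 / (lam * ES))) =
      a / (lam * ES) * (s / (a + ES * d * s)) := by
  rw [div_sub' hden, mul_div_assoc', div_mul_div_comm,
    div_eq_div_iff hden (mul_ne_zero (mul_ne_zero hlam hES) hden)]
  field_simp
  ring

theorem stmt1_general
    (μV : Measure ℝ) [IsProbabilityMeasure μV]
    (hVsupp : μV (Set.Iio 0) = 0)
    (lam : ℝ) (hlam : 0 < lam)
    (ES EV : ℝ)
    (hESpos : 0 < ES) (hVpos : 0 < μV (Set.Ioi 0))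
    (ρ : ℝ) (hρdef : ρ = lam * ES)
    (π : ℕ → ℝ)
    (Ploss : ℕ → ℝ)
    (hPloss : ∀ N : ℕ, Ploss N =
      (EV * π 0 + (ES - lam⁻¹) * (1 - qCoef μV lam 0) * (∑ j ∈ Finset.range N, π j)) /
      (EV * π 0 + ES * (1 - qCoef μV lam 0) * (∑ j ∈ Finset.range N, π j)))
    (hdiv : Tendsto (fun N : ℕ => ∑ j ∈ Finset.range N, π j) atTop atTop) :
    Tendsto (fun N : ℕ => (∑ j ∈ Finset.range N, π j) * (Ploss N - (1 - 1 / ρ))) atTop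
      (𝓝 (EV * π 0 / (ρ * ES * (1 - qCoef μV lam 0)))) := by
  subst hρdef
  set d := 1 - qCoef μV lam 0
  have hd : 0 < d := sub_pos.2 (qCoef_zero_lt_one μV hVsupp hVpos hlam)
  have hden : Tendsto (fun N => EV * π 0 + ES * d * ∑ j ∈ Finset.range N, π j) atTop atTop :=
    tendsto_atTop_add_const_left _ _ (hdiv.const_mul_atTop (mul_pos hESpos hd))
  have hlim := ((tendsto_div_const_add_mul_atTop (EV * π 0) (mul_pos hESpos hd).ne').comp
    hdiv).const_mul (EV * π 0 / (lam * ES))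
  convert hlim.congr' ?_ using 2
  · field_simp
  · filter_upwards [hden.eventually_ne_atTop 0] with N hN
    rw [hPloss N]
    exact (mul_loss_sub_eq lam ES _ d _ hlam.ne' hESpos.ne' hN).symm

theorem stmt1
    (μS μV : Measure ℝ) [IsProbabilityMeasure μS] [IsProbabilityMeasure μV]
    (hSsupp : μS (Set.Iio 0) = 0) (hVsupp : μV (Set.Iio 0) = 0)
    (lam : ℝ) (hlam : 0 < lam)
    (hSint : Integrable (fun t => t) μS) (hVint : Integrable (fun t => t) μV)
    (ES EV : ℝ) (hES : ES = ∫ t, t ∂μS) (hEV : EV = ∫ t, t ∂μV)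
    (hESpos : 0 < ES) (hEVpos : 0 < EV) (hVpos : 0 < μV (Set.Ioi 0))
    (ρ : ℝ) (hρdef : ρ = lam * ES)
    (π : ℕ → ℝ) (hπnn : ∀ n, 0 ≤ π n) (hπne : π ≠ 0)
    (hinv : ∀ j : ℕ, π j = π 0 * qBcoef μS μV lam j +
      ∑ k ∈ Finset.Icc 1 (j + 1), π k * qCoef μS lam (j + 1 - k))
    (Ploss : ℕ → ℝ)
    (hPloss : ∀ N : ℕ, Ploss N =
      (EV * π 0 + (ES - lam⁻¹) * (1 - qCoef μV lam 0) * (∑ j ∈ Finset.range N, π j)) /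
      (EV * π 0 + ES * (1 - qCoef μV lam 0) * (∑ j ∈ Finset.range N, π j)))
    (hdiv : Tendsto (fun N : ℕ => ∑ j ∈ Finset.range N, π j) atTop atTop)
    (hρ1 : 1 ≤ ρ) :
    Tendsto (fun N : ℕ => (∑ j ∈ Finset.range N, π j) * (Ploss N - (1 - 1 / ρ))) atTop
      (𝓝 (EV * π 0 / (ρ * ES * (1 - qCoef μV lam 0)))) :=
  stmt1_general μV hVsupp lam hlam ES EV hESpos hVpos ρ hρdef π Ploss hPloss hdiv
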